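/- arXiv:2304.02820 — 2 statements merged into one kernel-verified Lean document; each statement's English description precedes it below -/
import Mathlib

section
/- The set of periodic points of the tent map f₂(x) = min(2x, 2(1−x)) is dense in [0,1] with the Euclidean topology. -/
/-- The full tent map on [0,1]: f₂(x) = min(2x, 2(1-x)). -/
noncomputable def tentMap (x : Set.Icc (0:ℝ) 1) : Set.Icc (0:ℝ) 1 :=
  ⟨min (2 * x) (2 * (1 - x)), by
    constructor
    · exact le_min (by nlinarith [x.2.1]) (by nlinarith [x.2.2])
    · rcases le_or_gt (x : ℝ) (1/2) with h | h
      · exact le_trans (min_le_left _ _) (by linarith)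
      · exact le_trans (min_le_right _ _) (by linarith)⟩

/-!
The map `x ↦ cos (π x)` is a homeomorphism of `[0,1]` onto `[-1,1]` conjugating the tent map to
the doubling of angles, `cos (π f₂ⁿ(x)) = cos (2ⁿ π x)`. Hence `f₂ⁿ` fixes every point
`2j / (2ⁿ - 1)` of `[0,1]`, since `2ⁿ π x` then differs from `π x` by `2π j`; and these points
form grids of mesh `2 / (2ⁿ - 1) → 0`.
-/

open Real

lemma cos_pi_mul_tentMap (x : Set.Icc (0:ℝ) 1) :
    cos (π * tentMap x) = cos (2 * π * x) := by
  have hT : (tentMap x : ℝ) = min (2 * (x : ℝ)) (2 * (1 - x)) := rfl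
  rw [hT]
  rcases le_total (x : ℝ) (1 / 2) with hx | hx
  · rw [min_eq_left (by linarith)]
    ring_nf
  · rw [min_eq_right (by linarith), ← cos_two_pi_sub]
    ring_nf

lemma cos_pi_mul_tentMap_iterate (n : ℕ) (x : Set.Icc (0:ℝ) 1) :
    cos (π * tentMap^[n] x) = cos (2 ^ n * π * x) := by
  induction n with
  | zero => simp
  | succ n ih =>
    rw [Function.iterate_succ_apply', cos_pi_mul_tentMap, mul_assoc, cos_two_mul, ih,
      ← cos_two_mul]
    ring_nf

lemma tentMap_iterate_eq_self_of_cos_eq {n : ℕ} {x : Set.Icc (0:ℝ) 1}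
    (h : cos (2 ^ n * π * x) = cos (π * x)) : tentMap^[n] x = x := by
  have mem_Icc_pi (y : Set.Icc (0:ℝ) 1) : π * y ∈ Set.Icc 0 π :=
    ⟨by nlinarith [pi_pos, y.2.1], by nlinarith [pi_pos, y.2.2]⟩
  apply Subtype.ext
  have := injOn_cos (mem_Icc_pi _) (mem_Icc_pi x)
    ((cos_pi_mul_tentMap_iterate n x).trans h)
  exact mul_left_cancel₀ pi_ne_zero this

lemma tentMap_iterate_eq_self_of_eq_two_mul_div {n j : ℕ} (hn : n ≠ 0)
    {x : Set.Icc (0:ℝ) 1} (hx : (x : ℝ) = 2 * j / (2 ^ n - 1)) : tentMap^[n] x = x := by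
  have hq : (2:ℝ) ^ n - 1 ≠ 0 := by
    have : (2:ℝ) ≤ 2 ^ n := le_self_pow₀ one_le_two hn
    linarith
  apply tentMap_iterate_eq_self_of_cos_eq
  have : 2 ^ n * π * x = π * x + j * (2 * π) := by
    rw [hx]
    field_simp
    ring
  rw [this, cos_add_nat_mul_two_pi]

lemma exists_two_mul_div_le_lt {x q : ℝ} (hx : 0 ≤ x) (hq : 0 < q) :
    ∃ j : ℕ, 2 * j / q ≤ x ∧ x < 2 * j / q + 2 / q := by
  refine ⟨⌊x * q / 2⌋₊, ?_, ?_⟩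
  · rw [div_le_iff₀ hq]
    linarith [Nat.floor_le (by positivity : 0 ≤ x * q / 2)]
  · rw [← add_div, lt_div_iff₀ hq]
    linarith [Nat.lt_floor_add_one (x * q / 2)]

/-- The periodic points of the tent map are dense in [0,1] with the Euclidean
(subspace) topology. -/
theorem tentMap_periodic_points_dense :
    Dense {x : Set.Icc (0:ℝ) 1 | ∃ n : ℕ, 1 ≤ n ∧ tentMap^[n] x = x} := by
  rw [Metric.dense_iff]
  intro x ε hε
  obtain ⟨n, hn⟩ := pow_unbounded_of_one_lt (2 / ε + 1) one_lt_two
  have hq : 0 < (2:ℝ) ^ n - 1 := by linarith [div_pos two_pos hε]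
  have hn0 : n ≠ 0 := by rintro rfl; simp at hq
  have hmesh : 2 / ((2:ℝ) ^ n - 1) < ε := by
    rw [div_lt_iff₀ hq]
    linarith [(div_lt_iff₀ hε).mp (show 2 / ε < 2 ^ n - 1 by linarith)]
  obtain ⟨j, hjx, hxj⟩ := exists_two_mul_div_le_lt x.2.1 hq
  have hy : 2 * (j : ℝ) / (2 ^ n - 1) ∈ Set.Icc (0:ℝ) 1 := ⟨by positivity, hjx.trans x.2.2⟩
  refine ⟨⟨_, hy⟩, ?_, n, Nat.one_le_iff_ne_zero.mpr hn0,
    tentMap_iterate_eq_self_of_eq_two_mul_div hn0 rfl⟩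
  rw [Metric.mem_ball, Subtype.dist_eq, Real.dist_eq, abs_sub_lt_iff]
  constructor <;> linarith
end

section
/- If (X,d,f) is a discrete dynamical system with f continuous, X has infinitely many points, f is topologically transitive, and the periodic points of f are dense in X, then f is sensitive to initial conditions: there exists ε > 0 such that for all x ∈ X and all δ > 0 there exist y with d(x,y) < δ and n ≥ 1 with d(f^n(x), f^n(y)) > ε. -/
/-- Iterates of a periodic point reduce mod the period. -/
lemma bbcds_iter_mod {X : Type*} (f : X → X) (p : X) (n : ℕ) (_hn : 1 ≤ n)
    (hp : f^[n] p = p) (j : ℕ) : f^[j] p = f^[j % n] p := by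
  conv_lhs => rw [← Nat.mod_add_div j n, Function.iterate_add_apply]
  congr 1
  rw [Function.iterate_mul]
  exact Function.iterate_fixed hp _

/-- Banks–Brooks–Cairns–Davis–Stacey theorem: a continuous, topologically
transitive map with dense periodic points on an infinite metric space is
sensitive to initial conditions. -/
theorem banks_brooks_cairns_davis_stacey
    (X : Type*) [MetricSpace X] [Infinite X] (f : X → X)
    (hf : Continuous f)
    (htrans : ∀ U V : Set X, IsOpen U → IsOpen V → U.Nonempty → V.Nonempty →
      ∃ n : ℕ, (f^[n] '' U ∩ V).Nonempty)
    (hdense : Dense {x : X | ∃ n : ℕ, 1 ≤ n ∧ f^[n] x = x}) :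
    ∃ ε > (0:ℝ), ∀ x : X, ∀ δ > (0:ℝ), ∃ y : X, dist x y < δ ∧
      ∃ n : ℕ, 1 ≤ n ∧ dist (f^[n] x) (f^[n] y) > ε := by
  classical
  set P : Set X := {x : X | ∃ n : ℕ, 1 ≤ n ∧ f^[n] x = x} with hP
  -- first periodic point
  obtain ⟨x0⟩ : Nonempty X := inferInstance
  obtain ⟨q1, hq1P, -⟩ := hdense.exists_mem_open isOpen_univ ⟨x0, trivial⟩
  obtain ⟨n1, hn1, hq1⟩ := hq1P
  set s1 : Finset X := (Finset.range n1).image (fun i => f^[i] q1) with hs1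
  -- a point outside the (finite) orbit of q1
  obtain ⟨z0, hz0⟩ := Infinite.exists_notMem_finset s1
  -- second periodic point, outside s1
  obtain ⟨q2, hq2P, hq2mem⟩ := hdense.exists_mem_open
    (isOpen_compl_iff.mpr (Set.Finite.isClosed s1.finite_toSet))
    ⟨z0, by simpa using hz0⟩
  obtain ⟨n2, hn2, hq2⟩ := hq2P
  set s2 : Finset X := (Finset.range n2).image (fun i => f^[i] q2) with hs2
  -- the two orbits are disjoint
  have horb1 : ∀ i, f^[i] q1 ∈ s1 := by
    intro i
    rw [bbcds_iter_mod f q1 n1 hn1 hq1 i]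
    exact Finset.mem_image.mpr ⟨i % n1, Finset.mem_range.mpr (Nat.mod_lt _ hn1), rfl⟩
  have horb2 : ∀ i, f^[i] q2 ∈ s2 := by
    intro i
    rw [bbcds_iter_mod f q2 n2 hn2 hq2 i]
    exact Finset.mem_image.mpr ⟨i % n2, Finset.mem_range.mpr (Nat.mod_lt _ hn2), rfl⟩
  have hdisj : ∀ a, a ∈ s1 → a ∈ s2 → False := by
    intro a ha1 ha2
    obtain ⟨i, -, hi⟩ := Finset.mem_image.mp ha1
    obtain ⟨i', hi'r, hi'⟩ := Finset.mem_image.mp ha2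
    have hi'lt : i' < n2 := Finset.mem_range.mp hi'r
    -- then q2 is in the orbit of q1
    have : q2 = f^[(n2 - i') + i] q1 := by
      have h1 : f^[n2 - i'] (f^[i'] q2) = q2 := by
        rw [← Function.iterate_add_apply, Nat.sub_add_cancel hi'lt.le, hq2]
      rw [Function.iterate_add_apply, hi, ← hi', h1]
    exact hq2mem (by rw [this]; exact horb1 _)
  -- minimal distance between the orbits
  set F : Finset ℝ := (s1 ×ˢ s2).image (fun ab => dist ab.1 ab.2) with hF
  have hs1ne : s1.Nonempty := ⟨q1, by simpa using horb1 0⟩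
  have hs2ne : s2.Nonempty := ⟨q2, by simpa using horb2 0⟩
  have hFne : F.Nonempty := ⟨dist hs1ne.choose hs2ne.choose,
    Finset.mem_image.mpr ⟨(hs1ne.choose, hs2ne.choose),
      Finset.mem_product.mpr ⟨hs1ne.choose_spec, hs2ne.choose_spec⟩, rfl⟩⟩
  set c : ℝ := F.min' hFne with hc
  have hcpos : 0 < c := by
    rw [hc, Finset.lt_min'_iff]
    intro b hb
    obtain ⟨⟨a1, a2⟩, hab, rfl⟩ := Finset.mem_image.mp hb
    obtain ⟨ha1, ha2⟩ := Finset.mem_product.mp hab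
    have : a1 ≠ a2 := fun h => hdisj a1 ha1 (h ▸ ha2)
    exact dist_pos.mpr this
  have hcle : ∀ a ∈ s1, ∀ b ∈ s2, c ≤ dist a b := by
    intro a ha b hb
    exact Finset.min'_le _ _ (Finset.mem_image.mpr ⟨(a, b),
      Finset.mem_product.mpr ⟨ha, hb⟩, rfl⟩)
  refine ⟨c / 8, by linarith, ?_⟩
  intro x δ hδ
  set ε : ℝ := c / 8 with hε
  have hεpos : 0 < ε := by rw [hε]; linarith
  -- one of the two orbits is at distance ≥ 4ε from x
  have hfarq : ∃ q : X, ∃ nq : ℕ, 1 ≤ nq ∧ f^[nq] q = q ∧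
      ∀ i : ℕ, 4 * ε ≤ dist x (f^[i] q) := by
    by_cases h : ∀ a ∈ s1, c / 2 ≤ dist x a
    · exact ⟨q1, n1, hn1, hq1, fun i => by
        have := h _ (horb1 i); rw [hε]; linarith⟩
    · push_neg at h
      obtain ⟨a, ha, hax⟩ := h
      refine ⟨q2, n2, hn2, hq2, fun i => ?_⟩
      have hb := horb2 i
      have h1 : c ≤ dist a (f^[i] q2) := hcle a ha _ hb
      have h2 : dist a (f^[i] q2) ≤ dist x a + dist x (f^[i] q2) :=
        dist_triangle_left _ _ _
      rw [hε]; linarith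
  obtain ⟨q, nq, hnq, hqper, hfar⟩ := hfarq
  set δ' : ℝ := min δ ε with hδ'
  have hδ'pos : 0 < δ' := lt_min hδ hεpos
  have hδ'δ : δ' ≤ δ := min_le_left _ _
  have hδ'ε : δ' ≤ ε := min_le_right _ _
  -- periodic point p near x
  obtain ⟨p, hpball, hpP⟩ :=
    (Metric.dense_iff.mp hdense x δ' hδ'pos)
  obtain ⟨m, hm, hpper⟩ := hpP
  have hxp : dist x p < δ' := by
    rw [Metric.mem_ball, dist_comm] at hpball; exact hpball
  -- the open set V around q
  set V : Set X := ⋂ i ∈ Finset.range (m + 1), f^[i] ⁻¹' Metric.ball (f^[i] q) ε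
    with hV
  have hVopen : IsOpen V := isOpen_biInter_finset fun i _ =>
    (Metric.isOpen_ball).preimage (hf.iterate i)
  have hVne : V.Nonempty := ⟨q, Set.mem_iInter₂.mpr fun i _ =>
    by simp [Metric.mem_ball, hεpos]⟩
  obtain ⟨k, w, ⟨z, hzU, hwz⟩, hwV⟩ := htrans (Metric.ball x δ') V
    Metric.isOpen_ball hVopen ⟨x, Metric.mem_ball_self hδ'pos⟩ hVne
  have hxz : dist x z < δ' := by
    rw [Metric.mem_ball, dist_comm] at hzU; exact hzU
  -- arithmetic setup
  set N : ℕ := m * (k / m + 1) with hN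
  have hkm := Nat.div_add_mod k m
  have hmodlt : k % m < m := Nat.mod_lt _ hm
  have hNeq : N = m * (k / m) + m := by rw [hN]; ring
  set r : ℕ := N - k with hr
  have hkey : k + r = N ∧ 1 ≤ r ∧ r ≤ m ∧ 1 ≤ N := by
    set u := m * (k / m) with hu
    constructor
    · omega
    · omega
  obtain ⟨hkr, hr1, hrm, hN1⟩ := hkey
  -- f^[N] p = p
  have hNp : f^[N] p = p := by
    rw [hN, Function.iterate_mul]
    exact Function.iterate_fixed hpper _
  -- f^[N] z is ε-close to f^[r] q
  have hNz : dist (f^[N] z) (f^[r] q) < ε := by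
    have hmem : w ∈ f^[r] ⁻¹' Metric.ball (f^[r] q) ε := by
      have := Set.mem_iInter₂.mp hwV r (Finset.mem_range.mpr (by omega))
      exact this
    rw [Set.mem_preimage, Metric.mem_ball] at hmem
    have : f^[N] z = f^[r] w := by
      rw [← hwz, ← Function.iterate_add_apply, Nat.add_comm, hkr]
    rw [this]
    exact hmem
  -- x is far from f^[r] q
  have hxfar : 4 * ε ≤ dist x (f^[r] q) := hfar r
  -- dist p (f^[N] z) > 2ε
  have hpz : 2 * ε < dist p (f^[N] z) := by
    have t1 : dist x (f^[r] q) ≤ dist x p + dist p (f^[N] z) + dist (f^[N] z) (f^[r] q) :=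
      dist_triangle4 _ _ _ _
    have hxpε : dist x p < ε := lt_of_lt_of_le hxp hδ'ε
    linarith
  have tineq : dist p (f^[N] z) ≤ dist (f^[N] x) p + dist (f^[N] x) (f^[N] z) := by
    rw [dist_comm (f^[N] x) p]
    exact dist_triangle _ _ _
  by_cases hcase : ε < dist (f^[N] x) p
  · refine ⟨p, lt_of_lt_of_le hxp hδ'δ, N, hN1, ?_⟩
    rw [hNp]
    exact hcase
  · push_neg at hcase
    refine ⟨z, lt_of_lt_of_le hxz hδ'δ, N, hN1, ?_⟩
    linarith
end
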